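/- (Bitrace / dual Pieri for the q_m basis) In symmetric functions over ℚ(t), with q_m = Σ_{λ⊢m} p_λ/z_λ(t) and q_k^* the Hall-adjoint of multiplication by q_k, one has for any k ≥ 1 and any composition μ = (μ_1,...,μ_l): q_k^*(q_{μ_1} ⋯ q_{μ_l}) = Σ_{τ ⊨ k} (∏_{a : τ_a > 0} (τ_a)_t) · q_{μ_1 - τ_1} ⋯ q_{μ_l - τ_l}, where τ = (τ_1,...,τ_l) runs over all tuples of nonnegative integers summing to k, (m)_t = (t-1)^2[m]_{t^2}, and q_j = 0 for j < 0. -/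

import Mathlib

/-!
The operators `q_k^*` are the homogeneous parts of `exp (∑ₙ (1 - tⁿ) ∂_{pₙ} zⁿ / n)`, so they
satisfy the recursion `k q_k^* = ∑ⱼ j (1 - tʲ) q_{k-j}^* ∂_{pⱼ}`. Since every `∂_{pⱼ}` is a
derivation, this recursion shows that `f ↦ ∑ₖ q_k^*(f) zᵏ` is a ring homomorphism into power
series, which reduces the theorem to a single factor `q_m`. There
`∂_{pⱼ} q_m = (1 - tʲ)/j · q_{m-j}`, and the same recursion gives `q_n^* q_m = cₙ q_{m-n}` with
`n cₙ = ∑ⱼ (1 - tʲ)² c_{n-j}` and `c₀ = 1`; this recursion is solved by `cₙ = (n)_t`.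
-/

open Finset MvPolynomial

noncomputable section

/-- The base field `ℚ(t)`. -/
abbrev F : Type := RatFunc ℚ

/-- The indeterminate `t` of `ℚ(t)`. -/
def tq : F := RatFunc.X

/-- The ring of symmetric functions over `ℚ(t)`, modelled as the polynomial
algebra on the power sums: the variable `n` represents the power sum `p_n`. -/
abbrev SymF : Type := MvPolynomial ℕ F

/-- `p_λ = ∏_i p_{λ_i}`. -/
def pPoly (s : Multiset ℕ) : SymF := (s.map fun i => (X i : SymF)).prod

/-- `z_λ = ∏_i i^{m_i(λ)} m_i(λ)!`. -/
def zNat (s : Multiset ℕ) : ℕ := s.prod * ∏ i ∈ s.toFinset, (s.count i).factorial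

/-- `q_m(x;t) = ∑_{λ ⊢ m} p_λ / z_λ(t)`. -/
def qq (t : F) (m : ℕ) : SymF :=
  ∑ lam : m.Partition,
    (((lam.parts.map fun i => 1 - t ^ i).prod) / (zNat lam.parts : F)) • pPoly lam.parts

/-- `q_m` for integer index, with `q_j = 0` for `j < 0`. -/
def qqInt (t : F) (m : ℤ) : SymF := if m < 0 then 0 else qq t m.toNat

/-- The Hall-adjoint `q_k^*` of multiplication by `q_k`: the coefficient of
`z^{-k}` in `exp(∑_{n≥1} (1-t^n)(∂/∂p_n) z^{-n})`. -/
def Dop (t : F) (k : ℕ) : Module.End F SymF :=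
  ∑ lam : k.Partition,
    (((lam.parts.map fun i => 1 - t ^ i).prod) /
        (∏ i ∈ lam.parts.toFinset, ((lam.parts.count i).factorial : F))) •
      (((lam.parts.sort (· ≤ ·)).map fun i =>
        (MvPolynomial.pderiv i : Derivation F SymF SymF).toLinearMap).prod)

/-- `(m)_t = (t-1)^2 [m]_{t^2}` for `m ≥ 1`, and `(0)_t = 1`. -/
def parT (t : F) (m : ℕ) : F :=
  if m = 0 then 1 else (t - 1) ^ 2 * ∑ j ∈ Finset.range m, t ^ (2 * j)

theorem MvPolynomial.pderiv_pderiv_comm {R σ : Type*} [CommSemiring R] (i j : σ)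
    (f : MvPolynomial σ R) : pderiv i (pderiv j f) = pderiv j (pderiv i f) := by
  induction f using MvPolynomial.induction_on with
  | C a => simp only [pderiv_C, map_zero]
  | add p q hp hq => rw [map_add, map_add, hp, hq, map_add, map_add]
  | mul_X p n hp =>
    have hX : ∀ a b : σ, pderiv a (pderiv b (X n : MvPolynomial σ R)) = 0 := by
      intro a b
      by_cases h : b = n
      · subst h; simp
      · simp [pderiv_X_of_ne (Ne.symm h)]
    simp only [pderiv_mul, map_add, hp, hX]
    ring

theorem MvPolynomial.pderiv_multiset_prod_X {R σ : Type*} [CommSemiring R] [DecidableEq σ] (j : σ)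
    (s : Multiset σ) :
    pderiv j (s.map fun i => (X i : MvPolynomial σ R)).prod
      = s.count j • ((s.erase j).map fun i => (X i : MvPolynomial σ R)).prod := by
  induction s using Multiset.induction_on with
  | empty => simp
  | cons a s ih =>
    rw [Multiset.map_cons, Multiset.prod_cons, pderiv_mul, ih]
    by_cases h : a = j
    · subst h
      rw [pderiv_X_self, Multiset.count_cons_self, Multiset.erase_cons_head, one_mul, succ_nsmul',
        mul_smul_comm]
      by_cases ha : a ∈ s
      · rw [Multiset.prod_map_erase ha]
      · rw [Multiset.count_eq_zero_of_notMem ha, zero_smul, zero_smul]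
    · rw [pderiv_X_of_ne h, zero_mul, zero_add, Multiset.count_cons_of_ne (Ne.symm h),
        Multiset.erase_cons_tail s h, Multiset.map_cons, Multiset.prod_cons, mul_smul_comm]

theorem Nat.Partition.sum_ite_mem_erase {M : Type*} [AddCommMonoid M] {n a : ℕ} (ha1 : 1 ≤ a)
    (ha : a ≤ n) (f : Multiset ℕ → M) :
    ∑ lam : n.Partition, (if a ∈ lam.parts then f (lam.parts.erase a) else 0)
      = ∑ rho : (n - a).Partition, f rho.parts := by
  rw [← Finset.sum_filter, ← Finset.sum_subtype_eq_sum_filter, Finset.subtype_univ,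
    ← (partitionWithPartEquiv ha1 ha).sum_comp]
  simp only [partitionWithPartEquiv_apply_parts]

theorem Nat.Partition.natCast_eq_sum_count {R : Type*} [Semiring R] {k : ℕ} (lam : k.Partition) :
    (k : R) = ∑ j ∈ Icc 1 k, ((j * lam.parts.count j : ℕ) : R) := by
  have hsub : lam.parts.toFinset ⊆ Icc 1 k := fun i hi => by
    rw [Multiset.mem_toFinset] at hi
    exact Finset.mem_Icc.2 ⟨lam.parts_pos hi, lam.le_of_mem_parts hi⟩
  calc (k : R) = (lam.parts.sum : R) := by rw [lam.parts_sum]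
    _ = _ := by
      rw [Finset.sum_multiset_count_of_subset _ _ hsub, Nat.cast_sum]
      simp only [smul_eq_mul, mul_comm]

section Antidiagonal

variable {M : Type*} [AddCommMonoid M]

theorem Finset.Nat.sum_antidiagonal_sum_antidiagonal_fst (f : ℕ → ℕ → ℕ → M) (n : ℕ) :
    ∑ p ∈ antidiagonal n, ∑ q ∈ antidiagonal p.1, f q.1 q.2 p.2
      = ∑ p ∈ antidiagonal n, ∑ q ∈ antidiagonal p.2, f p.1 q.1 q.2 := by
  rw [Finset.sum_sigma', Finset.sum_sigma']
  refine Finset.sum_nbij' (fun x => ⟨(x.2.1, x.2.2 + x.1.2), (x.2.2, x.1.2)⟩)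
    (fun x => ⟨(x.1.1 + x.2.1, x.2.2), (x.1.1, x.2.1)⟩) ?_ ?_ ?_ ?_ ?_ <;>
    rintro ⟨⟨a, b⟩, c, d⟩ <;>
    simp +contextual only [Finset.mem_sigma, HasAntidiagonal.mem_antidiagonal, and_true,
      implies_true] <;> omega

theorem Finset.Nat.sum_antidiagonal_sum_antidiagonal_fst_swap (f : ℕ → ℕ → ℕ → M) (n : ℕ) :
    ∑ p ∈ antidiagonal n, ∑ q ∈ antidiagonal p.1, f q.1 q.2 p.2
      = ∑ p ∈ antidiagonal n, ∑ q ∈ antidiagonal p.1, f q.1 p.2 q.2 := by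
  rw [sum_antidiagonal_sum_antidiagonal_fst,
    sum_antidiagonal_sum_antidiagonal_fst (fun a b c => f a c b)]
  refine Finset.sum_congr rfl fun p _ => ?_
  rw [← Finset.Nat.sum_antidiagonal_swap]
  rfl

theorem Finset.sum_Icc_eq_sum_antidiagonal (g : ℕ → ℕ → M) (n : ℕ) (hg : g 0 n = 0) :
    ∑ j ∈ Icc 1 n, g j (n - j) = ∑ p ∈ antidiagonal n, g p.2 p.1 := by
  rw [← Finset.Nat.sum_antidiagonal_swap]
  simp only [Prod.fst_swap, Prod.snd_swap]
  rw [Finset.Nat.sum_antidiagonal_eq_sum_range_succ g, Finset.sum_range_succ', Nat.sub_zero, hg,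
    add_zero, Finset.range_eq_Ico, Finset.sum_Ico_add' (fun j => g j (n - j)), zero_add,
    Finset.Ico_add_one_right_eq_Icc]

end Antidiagonal

theorem PowerSeries.coeff_prod_eq_sum_antidiagonalTuple {R : Type*} [CommSemiring R] {l : ℕ}
    (f : Fin l → PowerSeries R) (k : ℕ) :
    coeff k (∏ a, f a) = ∑ τ ∈ Finset.Nat.antidiagonalTuple l k, ∏ a, coeff (τ a) (f a) := by
  rw [coeff_prod, Finset.finsuppAntidiag, Finset.sum_map,
    ← Finset.piAntidiag_univ_fin_eq_antidiagonalTuple]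
  exact Finset.sum_attach _ (fun τ : Fin l → ℕ => ∏ a, coeff (τ a) (f a))

def pderivEnd (i : ℕ) : Module.End F SymF := (pderiv i : Derivation F SymF SymF).toLinearMap

theorem commute_pderivEnd (i j : ℕ) : Commute (pderivEnd i) (pderivEnd j) :=
  LinearMap.ext fun f => pderiv_pderiv_comm i j f

def pderivProd (s : Multiset ℕ) : Module.End F SymF := ((s.sort (· ≤ ·)).map pderivEnd).prod

theorem pderivProd_eq_prod {s : Multiset ℕ} {l : List ℕ} (h : (l : Multiset ℕ) = s) :
    pderivProd s = (l.map pderivEnd).prod := by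
  refine List.Perm.prod_eq' (List.Perm.map _ ?_) ?_
  · rw [← Multiset.coe_eq_coe, Multiset.sort_eq, h]
  · exact List.pairwise_map.2 (List.pairwise_of_forall fun a b => commute_pderivEnd a b)

theorem pderivProd_zero : pderivProd 0 = 1 := pderivProd_eq_prod (l := []) rfl

theorem pderivProd_cons (j : ℕ) (s : Multiset ℕ) :
    pderivProd (j ::ₘ s) = pderivEnd j * pderivProd s := by
  rw [pderivProd_eq_prod (l := j :: s.sort (· ≤ ·)) (by rw [← Multiset.cons_coe, Multiset.sort_eq]),
    List.map_cons, List.prod_cons, pderivProd]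

theorem commute_pderivEnd_pderivProd (j : ℕ) (s : Multiset ℕ) :
    Commute (pderivEnd j) (pderivProd s) :=
  Commute.list_prod_right _ _ fun _ hx => by
    obtain ⟨b, -, rfl⟩ := List.mem_map.1 hx
    exact commute_pderivEnd j b

def oneSubPowProd (t : F) (s : Multiset ℕ) : F := (s.map fun i => 1 - t ^ i).prod

def multFactorial (s : Multiset ℕ) : ℕ := ∏ i ∈ s.toFinset, (s.count i).factorial

theorem oneSubPowProd_cons (t : F) (j : ℕ) (s : Multiset ℕ) :
    oneSubPowProd t (j ::ₘ s) = (1 - t ^ j) * oneSubPowProd t s := by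
  rw [oneSubPowProd, Multiset.map_cons, Multiset.prod_cons, oneSubPowProd]

theorem multFactorial_cons (j : ℕ) (s : Multiset ℕ) :
    multFactorial (j ::ₘ s) = (s.count j + 1) * multFactorial s := by
  have hsub : s.toFinset ⊆ (j ::ₘ s).toFinset := by simp [Finset.subset_insert]
  have hj : j ∈ (j ::ₘ s).toFinset := by simp
  have hout : ∀ i ∈ (j ::ₘ s).toFinset, i ∉ s.toFinset → (s.count i).factorial = 1 := by
    intro i _ hi
    rw [Multiset.count_eq_zero.2 (by simpa using hi), Nat.factorial_zero]
  rw [multFactorial, multFactorial, Finset.prod_subset hsub hout, ← Finset.mul_prod_erase _ _ hj,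
    ← Finset.mul_prod_erase _ _ hj, Multiset.count_cons_self, Nat.factorial_succ, mul_assoc]
  congr 2
  exact Finset.prod_congr rfl fun i hi => by
    rw [Multiset.count_cons_of_ne (Finset.ne_of_mem_erase hi)]

theorem zNat_cons (j : ℕ) (s : Multiset ℕ) :
    zNat (j ::ₘ s) = j * (s.count j + 1) * zNat s := by
  have h := multFactorial_cons j s
  rw [multFactorial, multFactorial] at h
  rw [zNat, zNat, h, Multiset.prod_cons]
  ring

theorem qq_eq_sum (t : F) (m : ℕ) :
    qq t m = ∑ lam : m.Partition,
      (oneSubPowProd t lam.parts / zNat lam.parts) • pPoly lam.parts := rfl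

theorem Dop_eq_sum (t : F) (k : ℕ) :
    Dop t k = ∑ lam : k.Partition,
      (oneSubPowProd t lam.parts / multFactorial lam.parts) • pderivProd lam.parts := by
  simp only [Dop, multFactorial, Nat.cast_prod]
  rfl

theorem pderiv_smul_pPoly (t : F) (j : ℕ) (s : Multiset ℕ) :
    pderiv j ((oneSubPowProd t s / zNat s) • pPoly s)
      = if j ∈ s then ((1 - t ^ j) / j) •
          ((oneSubPowProd t (s.erase j) / zNat (s.erase j)) • pPoly (s.erase j)) else 0 := by
  rw [Derivation.map_smul, pPoly, pderiv_multiset_prod_X]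
  split_ifs with h
  · obtain ⟨r, rfl⟩ := Multiset.exists_cons_of_mem h
    rw [Multiset.erase_cons_head, Multiset.count_cons_self, oneSubPowProd_cons, zNat_cons,
      ← Nat.cast_smul_eq_nsmul F, smul_smul, smul_smul, pPoly]
    congr 1
    have hc : ((r.count j + 1 : ℕ) : F) ≠ 0 := Nat.cast_add_one_ne_zero _
    push_cast at hc ⊢
    field_simp
  · rw [Multiset.count_eq_zero_of_notMem h, zero_smul, smul_zero]

theorem natCast_mul_count_smul_pderivProd (t : F) (j : ℕ) (s : Multiset ℕ) :
    ((j * s.count j : ℕ) : F) • ((oneSubPowProd t s / multFactorial s) • pderivProd s)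
      = if j ∈ s then ((j : F) * (1 - t ^ j)) • ((oneSubPowProd t (s.erase j) /
          multFactorial (s.erase j)) • (pderivEnd j * pderivProd (s.erase j))) else 0 := by
  split_ifs with h
  · obtain ⟨r, rfl⟩ := Multiset.exists_cons_of_mem h
    rw [Multiset.erase_cons_head, Multiset.count_cons_self, oneSubPowProd_cons, multFactorial_cons,
      pderivProd_cons, smul_smul, smul_smul]
    congr 1
    have hc : ((r.count j + 1 : ℕ) : F) ≠ 0 := Nat.cast_add_one_ne_zero _
    push_cast at hc ⊢
    field_simp
  · rw [Multiset.count_eq_zero_of_notMem h, mul_zero, Nat.cast_zero, zero_smul]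

theorem Dop_zero (t : F) : Dop t 0 = 1 := by
  rw [Dop_eq_sum, Finset.univ_unique, Finset.sum_singleton, Nat.Partition.partition_zero_parts]
  simp [oneSubPowProd, multFactorial, pderivProd_zero]

theorem commute_pderivEnd_Dop (j : ℕ) (t : F) (k : ℕ) : Commute (pderivEnd j) (Dop t k) := by
  rw [Dop_eq_sum]
  exact Commute.sum_right _ _ _ fun lam _ => (commute_pderivEnd_pderivProd j _).smul_right _

theorem natCast_smul_Dop (t : F) (k : ℕ) :
    (k : F) • Dop t k
      = ∑ p ∈ antidiagonal k, ((p.2 : F) * (1 - t ^ p.2)) • (Dop t p.1 * pderivEnd p.2) := by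
  let G : ℕ → Multiset ℕ → Module.End F SymF := fun j r =>
    ((j : F) * (1 - t ^ j)) • ((oneSubPowProd t r / multFactorial r) • (pderivEnd j * pderivProd r))
  have hterm : ∀ j ∈ Icc 1 k,
      ∑ lam : k.Partition, (if j ∈ lam.parts then G j (lam.parts.erase j) else 0)
        = ((j : F) * (1 - t ^ j)) • (Dop t (k - j) * pderivEnd j) := by
    intro j hj
    rw [Finset.mem_Icc] at hj
    rw [Nat.Partition.sum_ite_mem_erase hj.1 hj.2 (G j), ← (commute_pderivEnd_Dop j t _).eq,
      Dop_eq_sum, Finset.mul_sum, Finset.smul_sum]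
    simp only [G, mul_smul_comm]
  calc (k : F) • Dop t k
      = ∑ lam : k.Partition, ∑ j ∈ Icc 1 k,
          (if j ∈ lam.parts then G j (lam.parts.erase j) else 0) := by
        rw [Dop_eq_sum, Finset.smul_sum]
        refine Finset.sum_congr rfl fun lam _ => ?_
        rw [lam.natCast_eq_sum_count, Finset.sum_smul]
        exact Finset.sum_congr rfl fun j _ => natCast_mul_count_smul_pderivProd t j lam.parts
    _ = ∑ j ∈ Icc 1 k, ((j : F) * (1 - t ^ j)) • (Dop t (k - j) * pderivEnd j) := by
        rw [Finset.sum_comm]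
        exact Finset.sum_congr rfl hterm
    _ = _ := Finset.sum_Icc_eq_sum_antidiagonal
        (fun j i => ((j : F) * (1 - t ^ j)) • (Dop t i * pderivEnd j)) k (by simp)

theorem natCast_smul_Dop_apply (t : F) (n : ℕ) (f : SymF) :
    (n : F) • Dop t n f
      = ∑ p ∈ antidiagonal n, ((p.2 : F) * (1 - t ^ p.2)) • Dop t p.1 (pderiv p.2 f) := by
  rw [← LinearMap.smul_apply, natCast_smul_Dop, LinearMap.sum_apply]
  rfl

theorem Dop_apply_one (t : F) (k : ℕ) : Dop t k 1 = if k = 0 then 1 else 0 := by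
  split_ifs with hk
  · rw [hk, Dop_zero, Module.End.one_apply]
  · refine smul_right_injective SymF (Nat.cast_ne_zero.2 hk : (k : F) ≠ 0) ?_
    simp only [natCast_smul_Dop_apply, Derivation.map_one_eq_zero, map_zero, smul_zero,
      Finset.sum_const_zero]

theorem Dop_mul (t : F) (k : ℕ) (f g : SymF) :
    Dop t k (f * g) = ∑ p ∈ antidiagonal k, Dop t p.1 f * Dop t p.2 g := by
  induction k using Nat.strong_induction_on generalizing f g with
  | _ k ih =>
  rcases Nat.eq_zero_or_pos k with rfl | hk
  · simp [Dop_zero]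
  refine smul_right_injective SymF (Nat.cast_ne_zero.2 hk.ne' : (k : F) ≠ 0) ?_
  let c : ℕ → F := fun j => (j : F) * (1 - t ^ j)
  have hrec : ∀ p ∈ antidiagonal k, ∀ u v : SymF,
      c p.2 • Dop t p.1 (u * v) = c p.2 • ∑ q ∈ antidiagonal p.1, Dop t q.1 u * Dop t q.2 v := by
    intro p hp u v
    rcases Nat.eq_zero_or_pos p.2 with h | h
    · simp [c, h]
    · rw [ih p.1 (by rw [HasAntidiagonal.mem_antidiagonal] at hp; omega)]
  calc (k : F) • Dop t k (f * g)
      = ∑ p ∈ antidiagonal k, ∑ q ∈ antidiagonal p.1,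
            c p.2 • (Dop t q.1 (pderiv p.2 f) * Dop t q.2 g)
        + ∑ p ∈ antidiagonal k, ∑ q ∈ antidiagonal p.1,
            c p.2 • (Dop t q.1 f * Dop t q.2 (pderiv p.2 g)) := by
        rw [natCast_smul_Dop_apply, ← Finset.sum_add_distrib]
        refine Finset.sum_congr rfl fun p hp => ?_
        rw [pderiv_mul, map_add, smul_add, hrec p hp, hrec p hp, Finset.smul_sum, Finset.smul_sum]
    _ = ∑ p ∈ antidiagonal k, ∑ q ∈ antidiagonal p.1,
            c q.2 • (Dop t q.1 (pderiv q.2 f) * Dop t p.2 g)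
        + ∑ p ∈ antidiagonal k, ∑ q ∈ antidiagonal p.2,
            c q.2 • (Dop t p.1 f * Dop t q.1 (pderiv q.2 g)) := by
        rw [Finset.Nat.sum_antidiagonal_sum_antidiagonal_fst_swap
            (fun a b j => c j • (Dop t a (pderiv j f) * Dop t b g)),
          Finset.Nat.sum_antidiagonal_sum_antidiagonal_fst
            (fun a b j => c j • (Dop t a f * Dop t b (pderiv j g)))]
    _ = ∑ p ∈ antidiagonal k,
          (((p.1 : F) • Dop t p.1 f) * Dop t p.2 g + Dop t p.1 f * ((p.2 : F) • Dop t p.2 g)) := by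
        rw [← Finset.sum_add_distrib]
        refine Finset.sum_congr rfl fun p _ => ?_
        rw [natCast_smul_Dop_apply, natCast_smul_Dop_apply, Finset.sum_mul, Finset.mul_sum]
        simp only [c, smul_mul_assoc, mul_smul_comm]
    _ = (k : F) • ∑ p ∈ antidiagonal k, Dop t p.1 f * Dop t p.2 g := by
        rw [Finset.smul_sum]
        refine Finset.sum_congr rfl fun p hp => ?_
        rw [smul_mul_assoc, mul_smul_comm, ← add_smul, ← Nat.cast_add,
          HasAntidiagonal.mem_antidiagonal.1 hp]

section ParT

variable {R : Type*} [CommRing R]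

theorem sum_range_succ_pow_two_mul (t : R) (i : ℕ) :
    ∑ j ∈ range (i + 1), t ^ (2 * j) = 1 + t ^ 2 * ∑ j ∈ range i, t ^ (2 * j) := by
  rw [Finset.sum_range_succ', Finset.mul_sum, add_comm, mul_zero, pow_zero]
  exact congrArg _ (Finset.sum_congr rfl fun j _ => by ring)

theorem sq_sub_one_mul_sum_antidiagonal (t : R) (n : ℕ) :
    (t - 1) ^ 2 * ∑ p ∈ antidiagonal n, (1 - t ^ p.2) ^ 2
      = (n + 1) * (t - 1) ^ 2 + t ^ 2 * ((t - 1) ^ 2 * ∑ j ∈ range n, t ^ (2 * j))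
        + t ^ 2 * (1 - t ^ n) ^ 2 - (1 - t ^ (n + 1)) ^ 2 := by
  induction n with
  | zero => simp; ring
  | succ n ih =>
    rw [Finset.Nat.sum_antidiagonal_succ, Finset.sum_range_succ]
    push_cast
    linear_combination ih

-- The recursion `n (n)_t = ∑ (1 - tʲ)² (i)_t` over `i + j = n`, with every `(i)_t` replaced by
-- `(t - 1)² [i]_{t²}`; that is wrong only at `i = 0`, whose term is the `(1 - tⁿ)²` on the left.
theorem sq_sub_one_mul_sum_antidiagonal_mul_geom (t : R) (n : ℕ) :
    (t - 1) ^ 2 * ∑ p ∈ antidiagonal n, (1 - t ^ p.2) ^ 2 * ∑ j ∈ range p.1, t ^ (2 * j)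
        + (1 - t ^ n) ^ 2
      = n * ((t - 1) ^ 2 * ∑ j ∈ range n, t ^ (2 * j)) := by
  induction n with
  | zero => simp
  | succ n ih =>
    have hshift : ∑ p ∈ antidiagonal n, (1 - t ^ p.2) ^ 2 * ∑ j ∈ range (p.1 + 1), t ^ (2 * j)
        = ∑ p ∈ antidiagonal n, (1 - t ^ p.2) ^ 2
          + t ^ 2 * ∑ p ∈ antidiagonal n, (1 - t ^ p.2) ^ 2 * ∑ j ∈ range p.1, t ^ (2 * j) := by
      rw [Finset.mul_sum (antidiagonal n), ← Finset.sum_add_distrib]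
      exact Finset.sum_congr rfl fun p _ => by rw [sum_range_succ_pow_two_mul]; ring
    rw [Finset.Nat.sum_antidiagonal_succ, hshift, sum_range_succ_pow_two_mul]
    push_cast
    linear_combination t ^ 2 * ih + sq_sub_one_mul_sum_antidiagonal t n

end ParT

theorem parT_eq (t : F) (n : ℕ) :
    parT t n = (t - 1) ^ 2 * ∑ j ∈ range n, t ^ (2 * j) + if n = 0 then 1 else 0 := by
  rcases n with _ | n <;> simp [parT]

theorem sum_antidiagonal_mul_parT (t : F) (n : ℕ) :
    ∑ p ∈ antidiagonal n, (1 - t ^ p.2) ^ 2 * parT t p.1 = n * parT t n := by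
  rcases n with _ | n
  · simp [parT]
  have hpull : ∑ p ∈ antidiagonal n,
        (1 - t ^ p.2) ^ 2 * ((t - 1) ^ 2 * ∑ j ∈ range (p.1 + 1), t ^ (2 * j))
      = (t - 1) ^ 2 * ∑ p ∈ antidiagonal n,
        (1 - t ^ p.2) ^ 2 * ∑ j ∈ range (p.1 + 1), t ^ (2 * j) := by
    rw [Finset.mul_sum]
    exact Finset.sum_congr rfl fun p _ => by ring
  have h := sq_sub_one_mul_sum_antidiagonal_mul_geom t (n + 1)
  rw [Finset.Nat.sum_antidiagonal_succ] at h ⊢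
  simp only [parT_eq, Nat.add_one_ne_zero, if_false, if_true, add_zero, Finset.sum_range_zero,
    mul_zero, zero_add, hpull] at h ⊢
  linear_combination h

def DopSeries (t : F) : SymF →+* PowerSeries SymF where
  toFun f := PowerSeries.mk fun k => Dop t k f
  map_one' := by ext k; simp [PowerSeries.coeff_one, Dop_apply_one]
  map_mul' f g := by ext k; simp [PowerSeries.coeff_mul, Dop_mul]
  map_zero' := by ext k; simp
  map_add' f g := by ext k; simp

theorem coeff_DopSeries (t : F) (k : ℕ) (f : SymF) :
    PowerSeries.coeff k (DopSeries t f) = Dop t k f :=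
  PowerSeries.coeff_mk k fun k => Dop t k f

theorem Dop_prod (t : F) {l : ℕ} (k : ℕ) (f : Fin l → SymF) :
    Dop t k (∏ a, f a) = ∑ τ ∈ Finset.Nat.antidiagonalTuple l k, ∏ a, Dop t (τ a) (f a) := by
  simp only [← coeff_DopSeries, map_prod, PowerSeries.coeff_prod_eq_sum_antidiagonalTuple]

theorem qqInt_natCast (t : F) (m : ℕ) : qqInt t m = qq t m := by
  rw [qqInt, if_neg (Int.natCast_nonneg m).not_gt, Int.toNat_natCast]

theorem qqInt_of_neg (t : F) {m : ℤ} (hm : m < 0) : qqInt t m = 0 := if_pos hm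

theorem pderiv_qq (t : F) (j m : ℕ) :
    pderiv j (qq t m) = ((1 - t ^ j) / j) • qqInt t ((m : ℤ) - j) := by
  rw [qq_eq_sum, map_sum]
  simp only [pderiv_smul_pPoly]
  by_cases hj : 1 ≤ j ∧ j ≤ m
  · rw [Nat.Partition.sum_ite_mem_erase hj.1 hj.2
      (fun r => ((1 - t ^ j) / j) • ((oneSubPowProd t r / zNat r) • pPoly r)), ← Nat.cast_sub hj.2,
      qqInt_natCast, qq_eq_sum, Finset.smul_sum]
  · rw [Finset.sum_eq_zero fun lam _ =>
      if_neg fun h => hj ⟨lam.parts_pos h, lam.le_of_mem_parts h⟩]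
    rcases Nat.eq_zero_or_pos j with rfl | hpos
    · simp
    · rw [qqInt_of_neg t (by omega), smul_zero]

theorem pderiv_qqInt (t : F) (j : ℕ) (m : ℤ) :
    pderiv j (qqInt t m) = ((1 - t ^ j) / j) • qqInt t (m - j) := by
  rcases lt_or_ge m 0 with hm | hm
  · rw [qqInt_of_neg t hm, qqInt_of_neg t (by omega), map_zero, smul_zero]
  · lift m to ℕ using hm
    rw [qqInt_natCast, pderiv_qq]

theorem Dop_qqInt (t : F) (n : ℕ) (m : ℤ) :
    Dop t n (qqInt t m) = parT t n • qqInt t (m - n) := by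
  induction n using Nat.strong_induction_on generalizing m with
  | _ n ih =>
  rcases Nat.eq_zero_or_pos n with rfl | hn
  · simp [Dop_zero, parT]
  refine smul_right_injective SymF (Nat.cast_ne_zero.2 hn.ne' : (n : F) ≠ 0) ?_
  have hterm : ∀ p ∈ antidiagonal n,
      ((p.2 : F) * (1 - t ^ p.2)) • Dop t p.1 (pderiv p.2 (qqInt t m))
        = ((1 - t ^ p.2) ^ 2 * parT t p.1) • qqInt t (m - n) := by
    intro p hp
    rw [HasAntidiagonal.mem_antidiagonal] at hp
    rcases Nat.eq_zero_or_pos p.2 with h | h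
    · simp [h]
    · have hp2 : (p.2 : F) ≠ 0 := Nat.cast_ne_zero.2 h.ne'
      rw [pderiv_qqInt, map_smul, ih p.1 (by omega), smul_smul, smul_smul, sub_sub, ← Nat.cast_add,
        add_comm p.2, hp]
      congr 1
      field_simp
  simp only [natCast_smul_Dop_apply, Finset.sum_congr rfl hterm, ← Finset.sum_smul,
    sum_antidiagonal_mul_parT, smul_smul]

theorem qstar_qmu_general (k : ℕ) (l : ℕ) (μ : Fin l → ℕ) :
    Dop tq k (∏ a, qq tq (μ a))
      = ∑ τ ∈ Finset.Nat.antidiagonalTuple l k,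
          (∏ a, parT tq (τ a)) • ∏ a, qqInt tq ((μ a : ℤ) - (τ a : ℤ)) := by
  simp only [Dop_prod, ← qqInt_natCast, Dop_qqInt, Finset.prod_smul]

/-- bitrace / dual Pieri for the `q_m` basis: for `k ≥ 1` and a
composition `μ = (μ_1,…,μ_l)`,
`q_k^*(q_{μ_1} ⋯ q_{μ_l}) = ∑_{τ ⊨ k} (∏_{a : τ_a > 0} (τ_a)_t) q_{μ_1-τ_1} ⋯ q_{μ_l-τ_l}`,
where `τ` runs over tuples of `l` nonnegative integers summing to `k` and
`q_j = 0` for `j < 0`. -/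
theorem qstar_qmu (k : ℕ) (hk : 1 ≤ k) (l : ℕ) (μ : Fin l → ℕ)
    (hpos : ∀ a, 0 < μ a) :
    Dop tq k (∏ a, qq tq (μ a))
      = ∑ τ ∈ Finset.Nat.antidiagonalTuple l k,
          (∏ a, parT tq (τ a)) • ∏ a, qqInt tq ((μ a : ℤ) - (τ a : ℤ)) :=
  qstar_qmu_general k l μ

end
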